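/- arXiv:math/0610912 — 5 statements merged into one kernel-verified Lean document; each statement's English description precedes it below -/
import Mathlib

section
/- For every polynomial q ∈ ℚ[X], the derivative of s(q) equals q − (∫_0^1 q(t) dt)·1, where ∫_0^1 q(t) dt denotes the (rational) integral of q over [0,1] and 1 is the constant polynomial. -/
open Polynomial

noncomputable def Jint (q : ℚ[X]) : ℚ[X] :=
  q.sum fun n a => C (a * ((n : ℚ) + 1)⁻¹) * X ^ (n + 1)

lemma Jint_monomial (n : ℕ) (a : ℚ) :
    Jint (monomial n a) = C (a * ((n : ℚ) + 1)⁻¹) * X ^ (n + 1) := by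
  unfold Jint
  rw [Polynomial.sum_monomial_index]
  simp

lemma Jint_add (p q : ℚ[X]) : Jint (p + q) = Jint p + Jint q := by
  unfold Jint
  rw [Polynomial.sum_add_index]
  · intro n; simp
  · intro n b₁ b₂; rw [add_mul, C_add]; ring

lemma Jint_deriv (q : ℚ[X]) : derivative (Jint q) = q := by
  induction q using Polynomial.induction_on' with
  | add p q hp hq => rw [Jint_add, derivative_add, hp, hq]
  | monomial n a =>
      have h : ((n : ℚ) + 1) ≠ 0 := by positivity
      rw [Jint_monomial, derivative_C_mul, derivative_X_pow]
      simp only [Nat.cast_add, Nat.cast_one, Nat.add_sub_cancel]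
      rw [mul_comm (C ((n:ℚ)+1)) _, ← mul_assoc, mul_right_comm, ← C_mul, mul_assoc,
        inv_mul_cancel₀ h, mul_one, C_mul_X_pow_eq_monomial]

lemma key (s : ℚ[X] →ₗ[ℚ] ℚ[X])
    (hs : ∀ k : ℕ, s (X ^ k) = C (((k : ℚ) + 1)⁻¹) * (X ^ (k + 1) - X)) :
    ∀ q : ℚ[X], derivative (s q) = q - C ((Jint q).eval 1 - (Jint q).eval 0) := by
  intro q
  induction q using Polynomial.induction_on' with
  | add p q hp hq =>
      rw [map_add, derivative_add, hp, hq, Jint_add]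
      simp only [eval_add, C_add, C_sub]
      ring
  | monomial n a =>
      have h : ((n : ℚ) + 1) ≠ 0 := by positivity
      rw [Jint_monomial, ← C_mul_X_pow_eq_monomial, ← smul_eq_C_mul, map_smul, hs]
      rw [derivative_smul, derivative_mul, derivative_C, derivative_sub, derivative_X_pow,
        derivative_X]
      simp only [eval_mul, eval_pow, eval_C, eval_X, eval_one, one_pow, smul_eq_C_mul,
        Nat.add_sub_cancel, zero_mul, zero_add, ← C_eq_natCast]
      push_cast
      rw [zero_pow (Nat.succ_ne_zero n)]
      rw [mul_sub, mul_one, ← mul_assoc (C (((n:ℚ)+1)⁻¹)), ← C_mul,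
        inv_mul_cancel₀ h, C_1, one_mul]
      simp only [C_sub, C_mul, C_0, C_1, mul_one, mul_zero, sub_zero]
      ring
/-- For Dupont's contraction operator `s` on the 1-simplex (the unique `ℚ`-linear map on
`ℚ[X]` with `s(Xᵏ) = (X^{k+1} - X)/(k+1)`), the derivative of `s q` equals
`q - (∫₀¹ q(t) dt)·1`, where the integral of the polynomial `q` over `[0,1]` is expressed
as `Q(1) - Q(0)` for any antiderivative `Q` of `q`. -/
theorem derivative_dupont_s (s : ℚ[X] →ₗ[ℚ] ℚ[X])
    (hs : ∀ k : ℕ, s (X ^ k) = C (((k : ℚ) + 1)⁻¹) * (X ^ (k + 1) - X)) :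
    ∀ q Q : ℚ[X], derivative Q = q →
      derivative (s q) = q - C (Q.eval 1 - Q.eval 0) := by
  intro q Q hQ
  have hd : derivative (Q - Jint q) = 0 := by
    rw [derivative_sub, hQ, Jint_deriv, sub_self]
  have hc := eq_C_of_derivative_eq_zero hd
  have h1 : Q.eval 1 - (Jint q).eval 1 = Q.eval 0 - (Jint q).eval 0 := by
    have e1 : (Q - Jint q).eval 1 = (Q - Jint q).eval 0 := by rw [hc]; simp
    simpa [eval_sub] using e1
  have : Q.eval 1 - Q.eval 0 = (Jint q).eval 1 - (Jint q).eval 0 := by linarith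
  rw [this]
  exact key s hs q
end

section
/- For every polynomial q ∈ ℚ[X], one has s(q′) = q − ( q(0)·1 + (q(1) − q(0))·X ), where q′ denotes the derivative of q. -/
open Polynomial

/-- For Dupont's contraction operator `s` on the 1-simplex (the unique `ℚ`-linear map on
`ℚ[X]` with `s(Xᵏ) = (X^{k+1} - X)/(k+1)`), one has
`s(q') = q - (q(0)·1 + (q(1) - q(0))·X)` for every `q ∈ ℚ[X]`. -/
theorem dupont_s_of_derivative (s : ℚ[X] →ₗ[ℚ] ℚ[X])
    (hs : ∀ k : ℕ, s (X ^ k) = C (((k : ℚ) + 1)⁻¹) * (X ^ (k + 1) - X)) :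
    ∀ q : ℚ[X],
      s (derivative q) = q - (C (q.eval 0) * 1 + C (q.eval 1 - q.eval 0) * X) := by
  intro q
  induction q using Polynomial.induction_on with
  | C a =>
      simp
  | add p r hp hr =>
      rw [derivative_add, map_add, hp, hr]
      simp only [eval_add, C_add, C_sub]
      ring
  | monomial n a _ =>
      have hd : derivative (C a * X ^ (n + 1)) = C (((n : ℚ) + 1) * a) * X ^ n := by
        rw [derivative_C_mul, derivative_X_pow, Nat.add_sub_cancel, ← mul_assoc, ← C_mul]
        congr 1
        push_cast
        ring
      have hne : ((n : ℚ) + 1) ≠ 0 := by positivity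
      rw [hd, ← smul_eq_C_mul, map_smul, hs n, smul_eq_C_mul, ← mul_assoc, ← C_mul]
      have h2 : ((n : ℚ) + 1) * a * ((n : ℚ) + 1)⁻¹ = a := by field_simp
      rw [h2]
      simp only [eval_mul, eval_C, eval_pow, eval_X, zero_pow (Nat.succ_ne_zero n), one_pow,
        mul_zero, mul_one, C_0]
      ring
end

section
/- For every n ≥ 1, the polynomial p_n satisfies n!·p_n(t) = B_n(t) − B_n, where B_n(t) is the nth Bernoulli polynomial and B_n = B_n(0) is the nth Bernoulli number. -/
/-!
The operator `s` inverts the derivative up to an affine correction: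
`s (P') = P - P(0) - (P(1) - P(0)) X`.  Since `B'ₙ₊₁ = (n + 1) Bₙ`, `Bₙ₊₁(1) = Bₙ₊₁(0)` for
`n ≥ 1`, and `s` kills constants, `s` sends `Bₙ - Bₙ(0)` to `(Bₙ₊₁ - Bₙ₊₁(0)) / (n + 1)`;
induction on `n` gives the claim.
-/

open Polynomial

theorem LinearMap.map_C_mul {R : Type*} [CommSemiring R] (s : R[X] →ₗ[R] R[X]) (a : R)
    (q : R[X]) :
    s (C a * q) = C a * s q := by
  rw [← smul_eq_C_mul, map_smul, smul_eq_C_mul]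

section

variable {K : Type*} [Field K]

theorem dupont_apply_C (s : K[X] →ₗ[K] K[X])
    (hs : ∀ k : ℕ, s (X ^ k) = C (((k : K) + 1)⁻¹) * (X ^ (k + 1) - X)) (a : K) :
    s (C a) = 0 := by
  rw [← mul_one (C a), s.map_C_mul, ← pow_zero X, hs 0]
  simp

theorem dupont_apply_derivative [CharZero K] (s : K[X] →ₗ[K] K[X])
    (hs : ∀ k : ℕ, s (X ^ k) = C (((k : K) + 1)⁻¹) * (X ^ (k + 1) - X)) (P : K[X]) :
    s (derivative P) = P - C (P.eval 0) - C (P.eval 1 - P.eval 0) * X := by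
  induction P using Polynomial.induction_on with
  | C a => simp
  | add P Q hP hQ =>
    rw [derivative_add, map_add, hP, hQ]
    simp only [eval_add, map_add, map_sub]
    ring
  | monomial n a _ =>
    have hn : ((n : K) + 1) ≠ 0 := n.cast_add_one_ne_zero
    rw [derivative_C_mul_X_pow, s.map_C_mul, add_tsub_cancel_right, hs, ← mul_assoc, ← C_mul]
    push_cast
    rw [mul_assoc, mul_inv_cancel₀ hn, mul_one]
    simp [mul_sub]

end

theorem Polynomial.bernoulli_eval_one_eq_eval_zero {n : ℕ} (hn : n ≠ 1) :
    (bernoulli n).eval 1 = (bernoulli n).eval 0 := by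
  rw [bernoulli_eval_one, bernoulli_eval_zero, bernoulli_eq_bernoulli'_of_ne_one hn]

theorem dupont_apply_bernoulli (s : ℚ[X] →ₗ[ℚ] ℚ[X])
    (hs : ∀ k : ℕ, s (X ^ k) = C (((k : ℚ) + 1)⁻¹) * (X ^ (k + 1) - X)) {n : ℕ} (hn : 1 ≤ n) :
    C ((n : ℚ) + 1) * s (Polynomial.bernoulli n) =
      Polynomial.bernoulli (n + 1) - C (_root_.bernoulli (n + 1)) := by
  rw [← s.map_C_mul, C_add, C_1, map_natCast, ← derivative_bernoulli_add_one,
    dupont_apply_derivative s hs, bernoulli_eval_one_eq_eval_zero (by omega), bernoulli_eval_zero]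
  simp

/-- Let `s` be Dupont's contraction operator on the 1-simplex (the unique `ℚ`-linear map
on `ℚ[X]` with `s(Xᵏ) = (X^{k+1} - X)/(k+1)`) and let `p n` be defined by the recursion
`p 1 = X`, `p n = s (p (n-1))` for `n ≥ 2`.  Then for every `n ≥ 1` one has
`n! · pₙ(t) = Bₙ(t) - Bₙ`, where `Bₙ(t)` is the `n`-th Bernoulli polynomial (with the
convention `B₁(t) = t - 1/2`) and `Bₙ = Bₙ(0)` is the `n`-th Bernoulli number. -/
theorem factorial_smul_dupont_p_eq_bernoulli (s : ℚ[X] →ₗ[ℚ] ℚ[X])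
    (hs : ∀ k : ℕ, s (X ^ k) = C (((k : ℚ) + 1)⁻¹) * (X ^ (k + 1) - X))
    (p : ℕ → ℚ[X]) (hp1 : p 1 = X) (hp : ∀ n : ℕ, 2 ≤ n → p n = s (p (n - 1))) :
    ∀ n : ℕ, 1 ≤ n →
      C ((n.factorial : ℚ)) * p n = Polynomial.bernoulli n - C (_root_.bernoulli n) := by
  intro n hn
  induction n, hn using Nat.le_induction with
  | base =>
    rw [Nat.factorial_one, Nat.cast_one, C_1, one_mul, hp1, Polynomial.bernoulli_one,
      _root_.bernoulli_one, sub_sub, ← C_add]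
    norm_num
  | succ n hn ih =>
    calc C ((n + 1).factorial : ℚ) * p (n + 1)
        = C ((n : ℚ) + 1) * s (C (n.factorial : ℚ) * p n) := by
          rw [hp (n + 1) (by omega), Nat.add_sub_cancel, s.map_C_mul, ← mul_assoc, ← C_mul,
            Nat.factorial_succ]
          push_cast; rfl
      _ = Polynomial.bernoulli (n + 1) - C (_root_.bernoulli (n + 1)) := by
          rw [ih, map_sub, dupont_apply_C s hs, sub_zero, dupont_apply_bernoulli s hs hn]
end

section
/- For every n ≥ 1, ∫_0^1 p_n(t) dt = −B_n/n!; equivalently, b_n := (−1)^{n−1} ∫_0^1 p_n(t) dt equals (−1)^n B_n/n!. -/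
open Polynomial

noncomputable def dupontIint : ℚ[X] →ₗ[ℚ] ℚ :=
  Polynomial.lsum fun k => ((k : ℚ) + 1)⁻¹ • LinearMap.id

lemma dupontIint_monomial (n : ℕ) (a : ℚ) :
    dupontIint (monomial n a) = a / ((n : ℚ) + 1) := by
  simp [dupontIint, Polynomial.lsum_apply, Polynomial.sum_monomial_index,
    div_eq_inv_mul, smul_eq_mul, mul_comm]

lemma dupont_ftc (Q : ℚ[X]) : Q.eval 1 - Q.eval 0 = dupontIint (derivative Q) := by
  have h : (leval (1 : ℚ) - leval 0 : ℚ[X] →ₗ[ℚ] ℚ)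
      = dupontIint ∘ₗ (derivative : ℚ[X] →ₗ[ℚ] ℚ[X]) := by
    apply Polynomial.lhom_ext'
    intro n
    apply LinearMap.ext
    intro a
    simp only [LinearMap.coe_comp, Function.comp_apply, LinearMap.sub_apply, leval_apply,
      derivative_monomial, dupontIint_monomial, eval_monomial]
    cases n with
    | zero => simp
    | succ m =>
      simp only [Nat.add_sub_cancel, Nat.cast_add, Nat.cast_one, one_pow, mul_one]
      rw [zero_pow (Nat.succ_ne_zero m), mul_zero, sub_zero]
      field_simp
  have := LinearMap.congr_fun h Q
  simpa using this

section S
variable (s : ℚ[X] →ₗ[ℚ] ℚ[X])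
    (hs : ∀ k : ℕ, s (X ^ k) = C (((k : ℚ) + 1)⁻¹) * (X ^ (k + 1) - X))

include hs

lemma dupont_s_monomial (n : ℕ) (a : ℚ) :
    s (monomial n a) = a • (C (((n : ℚ) + 1)⁻¹) * (X ^ (n + 1) - X)) := by
  rw [← smul_X_eq_monomial, map_smul, hs]

lemma dupont_s_eval_zero (q : ℚ[X]) : (s q).eval 0 = 0 := by
  have h : (leval (0 : ℚ)) ∘ₗ s = 0 := by
    apply Polynomial.lhom_ext'
    intro n
    apply LinearMap.ext
    intro a
    simp [dupont_s_monomial s hs, zero_pow (Nat.succ_ne_zero n)]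
  simpa using LinearMap.congr_fun h q

lemma dupont_s_derivative (q : ℚ[X]) :
    derivative (s q) = q - C (dupontIint q) := by
  have h : (derivative : ℚ[X] →ₗ[ℚ] ℚ[X]) ∘ₗ s
      = LinearMap.id - (LinearMap.toSpanSingleton ℚ ℚ[X] 1) ∘ₗ dupontIint := by
    apply Polynomial.lhom_ext'
    intro n
    apply LinearMap.ext
    intro a
    simp only [LinearMap.coe_comp, Function.comp_apply, LinearMap.sub_apply, LinearMap.id_apply,
      LinearMap.toSpanSingleton_apply, dupont_s_monomial s hs, dupontIint_monomial,
      derivative_smul, derivative_mul, derivative_C, zero_mul, derivative_sub, derivative_X_pow,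
      derivative_X, zero_add, smul_eq_C_mul]
    rw [← smul_X_eq_monomial]
    push_cast
    have hne : ((n : ℚ) + 1) ≠ 0 := by positivity
    have h1 : (C ((((n : ℚ)) + 1)⁻¹) * C (((n : ℚ)) + 1) : ℚ[X]) = 1 := by
      rw [← C_mul, inv_mul_cancel₀ hne, C_1]
    rw [smul_eq_C_mul, mul_one, div_eq_mul_inv, C_mul]
    calc C a * (C (((n : ℚ) + 1))⁻¹ * (C ((n : ℚ) + 1) * X ^ n - 1))
        = C a * ((C (((n : ℚ) + 1))⁻¹ * C ((n : ℚ) + 1)) * X ^ n) - C a * C (((n : ℚ) + 1))⁻¹ := by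
          ring
      _ = C a * X ^ n - C a * C (((n : ℚ) + 1))⁻¹ := by rw [h1, one_mul]
  have := LinearMap.congr_fun h q
  simpa [smul_eq_C_mul] using this

end S

/-- `pₙ = (Bₙ(X) - Bₙ)/n!`. -/
noncomputable def dupontP (n : ℕ) : ℚ[X] :=
  C ((n.factorial : ℚ)⁻¹) * (Polynomial.bernoulli n - C (_root_.bernoulli n))

/-- An explicit antiderivative of `dupontP n`. -/
noncomputable def dupontA (n : ℕ) : ℚ[X] :=
  C (((n + 1).factorial : ℚ)⁻¹) * Polynomial.bernoulli (n + 1)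
    - C ((n.factorial : ℚ)⁻¹ * _root_.bernoulli n) * X

lemma dupont_fact_succ (n : ℕ) :
    (C (((n + 1).factorial : ℚ)⁻¹) * ((n : ℚ[X]) + 1) : ℚ[X]) = C ((n.factorial : ℚ)⁻¹) := by
  have h : C ((n : ℚ) + 1) = ((n : ℚ[X]) + 1) := by rw [map_add, C_1, C_eq_natCast]
  rw [← h, ← C_mul]
  congr 1
  rw [Nat.factorial_succ]
  have h1 : ((n.factorial : ℚ)) ≠ 0 := by positivity
  have h2 : ((n : ℚ) + 1) ≠ 0 := by positivity
  push_cast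
  field_simp

lemma dupont_derivative_A (n : ℕ) : derivative (dupontA n) = dupontP n := by
  rw [dupontA, dupontP, derivative_sub, derivative_mul, derivative_C, zero_mul, zero_add,
    Polynomial.derivative_bernoulli_add_one, derivative_mul, derivative_C, zero_mul,
    derivative_X, zero_add, mul_one, ← mul_assoc, dupont_fact_succ, C_mul, mul_sub]

lemma dupont_eval_A {n : ℕ} (hn : 1 ≤ n) :
    (dupontA n).eval 1 - (dupontA n).eval 0 = -(_root_.bernoulli n) / (n.factorial : ℚ) := by
  have hb : _root_.bernoulli (n + 1) = _root_.bernoulli' (n + 1) :=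
    bernoulli_eq_bernoulli'_of_ne_one (by omega)
  simp only [dupontA, eval_sub, eval_mul, eval_C, eval_X, mul_one, mul_zero, sub_zero,
    Polynomial.bernoulli_eval_one, Polynomial.bernoulli_eval_zero, ← hb]
  rw [neg_div, div_eq_inv_mul]
  ring

lemma dupont_Iint_P {n : ℕ} (hn : 1 ≤ n) :
    dupontIint (dupontP n) = -(_root_.bernoulli n) / (n.factorial : ℚ) := by
  have h := dupont_ftc (dupontA n)
  rw [dupont_derivative_A] at h
  rw [← h]
  exact dupont_eval_A hn

lemma dupont_derivative_P_succ (n : ℕ) :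
    derivative (dupontP (n + 1)) = dupontP n + C ((n.factorial : ℚ)⁻¹ * _root_.bernoulli n) := by
  have h : dupontP (n + 1) = dupontA n + C ((n.factorial : ℚ)⁻¹ * _root_.bernoulli n) * X
      - C (((n + 1).factorial : ℚ)⁻¹ * _root_.bernoulli (n + 1)) := by
    rw [dupontP, dupontA]
    simp only [C_mul]
    ring
  rw [h, derivative_sub, derivative_add, dupont_derivative_A, derivative_mul, derivative_C,
    zero_mul, zero_add, derivative_X, mul_one, derivative_C, sub_zero]

lemma dupont_P_eval_zero (n : ℕ) : (dupontP n).eval 0 = 0 := by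
  simp [dupontP, Polynomial.bernoulli_eval_zero]

section Main
variable (s : ℚ[X] →ₗ[ℚ] ℚ[X])
    (hs : ∀ k : ℕ, s (X ^ k) = C (((k : ℚ) + 1)⁻¹) * (X ^ (k + 1) - X))

include hs

lemma dupont_s_P (n : ℕ) (hn : 1 ≤ n) : s (dupontP n) = dupontP (n + 1) := by
  have hd : derivative (s (dupontP n) - dupontP (n + 1)) = 0 := by
    rw [derivative_sub, dupont_s_derivative s hs, dupont_Iint_P hn, dupont_derivative_P_succ,
      neg_div, div_eq_inv_mul, map_neg]
    ring
  have h := Polynomial.eq_C_of_derivative_eq_zero hd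
  have h0 : (s (dupontP n) - dupontP (n + 1)).eval 0 = 0 := by
    rw [eval_sub, dupont_s_eval_zero s hs, dupont_P_eval_zero, sub_zero]
  rw [h, eval_C] at h0
  rw [h0, C_0] at h
  exact sub_eq_zero.mp h

lemma dupont_p_formula (p : ℕ → ℚ[X]) (hp1 : p 1 = X) (hp : ∀ n : ℕ, 2 ≤ n → p n = s (p (n - 1))) :
    ∀ n : ℕ, 1 ≤ n → p n = dupontP n := by
  refine Nat.le_induction ?_ ?_
  · rw [hp1, dupontP]
    have h1 : Polynomial.bernoulli 1 = X + C (-1/2 : ℚ) := by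
      simp [Polynomial.bernoulli, Finset.sum_range_succ, _root_.bernoulli_one,
        _root_.bernoulli_zero, Polynomial.monomial_one_one_eq_X]
    rw [h1, _root_.bernoulli_one]
    norm_num
  · intro n hn ih
    rw [hp (n + 1) (by omega), Nat.add_sub_cancel, ih, dupont_s_P s hs n hn]

end Main

/-- Let `s` be Dupont's contraction operator on the 1-simplex (the unique `ℚ`-linear map
on `ℚ[X]` with `s(Xᵏ) = (X^{k+1} - X)/(k+1)`) and let `p n` be defined by the recursion
`p 1 = X`, `p n = s (p (n-1))` for `n ≥ 2`.  Then for every `n ≥ 1`,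
`∫₀¹ pₙ(t) dt = -Bₙ/n!` — the integral being `Q(1) - Q(0)` for any antiderivative `Q` of
`pₙ` — or equivalently `bₙ := (-1)^{n-1} ∫₀¹ pₙ(t) dt` equals `(-1)ⁿ Bₙ/n!`, where `Bₙ`
is the `n`-th Bernoulli number (with `B₁ = -1/2`). -/
theorem integral_dupont_p_eq_neg_bernoulli_div_factorial (s : ℚ[X] →ₗ[ℚ] ℚ[X])
    (hs : ∀ k : ℕ, s (X ^ k) = C (((k : ℚ) + 1)⁻¹) * (X ^ (k + 1) - X))
    (p : ℕ → ℚ[X]) (hp1 : p 1 = X) (hp : ∀ n : ℕ, 2 ≤ n → p n = s (p (n - 1))) :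
    ∀ n : ℕ, 1 ≤ n → ∀ Q : ℚ[X], derivative Q = p n →
      Q.eval 1 - Q.eval 0 = -(_root_.bernoulli n) / (n.factorial : ℚ) ∧
      (-1 : ℚ) ^ (n - 1) * (Q.eval 1 - Q.eval 0) =
        (-1 : ℚ) ^ n * _root_.bernoulli n / (n.factorial : ℚ) := by
  intro n hn Q hQ
  rw [dupont_p_formula s hs p hp1 hp n hn] at hQ
  have h1 : Q.eval 1 - Q.eval 0 = -(_root_.bernoulli n) / (n.factorial : ℚ) := by
    rw [dupont_ftc Q, hQ, dupont_Iint_P hn]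
  refine ⟨h1, ?_⟩
  rw [h1]
  obtain ⟨m, rfl⟩ : ∃ m, n = m + 1 := ⟨n - 1, by omega⟩
  rw [Nat.add_sub_cancel, pow_succ]
  ring
end

section
/- As a formal power series in z with coefficients in ℚ[t], the generating function P(z,t) = Σ_{n≥1} p_n(t) z^n satisfies P(z,t)·(e^z − 1) = z·(e^{zt} − 1), where e^z = Σ_{n≥0} z^n/n! and e^{zt} = Σ_{n≥0} t^n z^n/n!. -/
open Polynomial

/-- Let `s` be Dupont's contraction operator on the 1-simplex (the unique `ℚ`-linear map
on `ℚ[X]` with `s(Xᵏ) = (X^{k+1} - X)/(k+1)`) and let `p n` be defined by the recursion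
`p 1 = X`, `p n = s (p (n-1))` for `n ≥ 2`.  Then, as formal power series in `z` with
coefficients in `ℚ[t]`, the generating function `P(z,t) = Σ_{n≥1} pₙ(t) zⁿ` satisfies
`P(z,t)·(e^z - 1) = z·(e^{zt} - 1)`, where `e^z = Σ_{n≥0} zⁿ/n!` and
`e^{zt} = Σ_{n≥0} tⁿ zⁿ/n!`. -/
theorem dupont_p_generating_function (s : ℚ[X] →ₗ[ℚ] ℚ[X])
    (hs : ∀ k : ℕ, s (X ^ k) = C (((k : ℚ) + 1)⁻¹) * (X ^ (k + 1) - X))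
    (p : ℕ → ℚ[X]) (hp1 : p 1 = X) (hp : ∀ n : ℕ, 2 ≤ n → p n = s (p (n - 1))) :
    (PowerSeries.mk fun n => if n = 0 then 0 else p n) *
        ((PowerSeries.mk fun n => (C ((n.factorial : ℚ)⁻¹) : ℚ[X])) - 1) =
      PowerSeries.X *
        ((PowerSeries.mk fun n => (C ((n.factorial : ℚ)⁻¹) * X ^ n : ℚ[X])) - 1) := by
  classical
  have key : ∀ m : ℕ, ∑ j ∈ Finset.range (m + 1),
      (((m + 1 - j).factorial : ℚ))⁻¹ • p (j + 1)
      = (((m + 1).factorial : ℚ))⁻¹ • X ^ (m + 1) := by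
    intro m
    induction m with
    | zero => simp [hp1]
    | succ m ih =>
      have hps : ∀ j : ℕ, p (j + 2) = s (p (j + 1)) := by
        intro j
        have := hp (j + 2) (by omega)
        simpa using this
      have h2 : s (∑ j ∈ Finset.range (m + 1), (((m + 1 - j).factorial : ℚ))⁻¹ • p (j + 1))
          = ∑ j ∈ Finset.range (m + 1), (((m + 1 - j).factorial : ℚ))⁻¹ • p (j + 2) := by
        rw [map_sum]
        exact Finset.sum_congr rfl fun j _ => by rw [map_smul, ← hps]
      have hc : (((m + 1).factorial : ℚ))⁻¹ * (((m + 1 : ℕ) : ℚ) + 1)⁻¹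
          = (((m + 2).factorial : ℚ))⁻¹ := by
        rw [Nat.factorial_succ (m + 1)]
        push_cast
        rw [mul_inv]
        ring
      have h3 : s ((((m + 1).factorial : ℚ))⁻¹ • X ^ (m + 1))
          = (((m + 2).factorial : ℚ))⁻¹ • X ^ (m + 2) - (((m + 2).factorial : ℚ))⁻¹ • X := by
        rw [map_smul, hs (m + 1), smul_eq_C_mul, ← mul_assoc, ← C_mul, hc,
          smul_eq_C_mul, smul_eq_C_mul]
        ring
      rw [Finset.sum_range_succ']
      have hre : ∀ i ∈ Finset.range (m + 1),
          (((m + 1 + 1 - (i + 1)).factorial : ℚ))⁻¹ • p (i + 1 + 1)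
          = (((m + 1 - i).factorial : ℚ))⁻¹ • p (i + 2) := by
        intro i _
        have h1 : m + 1 + 1 - (i + 1) = m + 1 - i := by omega
        rw [h1]
      rw [Finset.sum_congr rfl hre, ← h2, ih, h3, hp1]
      simp only [Nat.sub_zero]
      have h4 : m + 1 + 1 = m + 2 := rfl
      rw [h4]
      ring
  refine PowerSeries.ext fun n => ?_
  rw [PowerSeries.coeff_mul]
  rcases n with _ | n
  · simp
  rw [PowerSeries.coeff_succ_X_mul]
  rw [Finset.Nat.sum_antidiagonal_eq_sum_range_succ_mk]
  simp only [PowerSeries.coeff_mk, map_sub, PowerSeries.coeff_one]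
  rcases n with _ | n
  · simp [Finset.sum_range_succ]
  · rw [Finset.sum_range_succ, Finset.sum_range_succ']
    have hmid : ∀ i ∈ Finset.range (n + 1),
        (if i + 1 = 0 then (0:ℚ[X]) else p (i + 1)) *
          (C (((n + 1 + 1 - (i + 1)).factorial : ℚ)⁻¹)
            - if n + 1 + 1 - (i + 1) = 0 then 1 else 0)
        = (((n + 1 - i).factorial : ℚ))⁻¹ • p (i + 1) := by
      intro i hi
      rw [Finset.mem_range] at hi
      have h1 : n + 1 + 1 - (i + 1) = n + 1 - i := by omega
      rw [h1, if_neg (Nat.succ_ne_zero i), if_neg (by omega : ¬ n + 1 - i = 0), sub_zero,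
        smul_eq_C_mul, mul_comm]
    rw [Finset.sum_congr rfl hmid, key n]
    simp [smul_eq_C_mul]
end
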